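/- If P —m̄(A)→ P' then P ≡ m̄(A) | P', and if P —m(X)→ P' then there exist P₁, P₂ with P ≡ m(X).P₁ | P₂ and P' ≡ P₁ | P₂. -/

import Mathlib

/-! Syntax of the calculus HOπ^p : HOcore with name and process parameterization. -/

inductive Tm : Type
  | nil : Tm
  | pvar : ℕ → Tm
  | inp : ℕ → ℕ → Tm → Tm          -- m(X).P
  | out : ℕ → Tm → Tm              -- m̄(Q)
  | par : Tm → Tm → Tm
  | pabs : ℕ → Tm → Tm             -- ⟨X⟩P
  | papp : Tm → Tm → Tm            -- P⟨Q⟩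
  | nabs : ℕ → Tm → Tm             -- ⟨x⟩P
  | napp : Tm → ℕ → Tm             -- P⟨n⟩
  deriving DecidableEq

namespace Tm

/-- substitution of the term `R` for the process variable `X` -/
def psubst : Tm → ℕ → Tm → Tm
  | nil, _, _ => nil
  | pvar Y, X, R => if Y = X then R else pvar Y
  | inp m Y P, X, R => if Y = X then inp m Y P else inp m Y (psubst P X R)
  | out m P, X, R => out m (psubst P X R)
  | par P Q, X, R => par (psubst P X R) (psubst Q X R)
  | pabs Y P, X, R => if Y = X then pabs Y P else pabs Y (psubst P X R)
  | papp P Q, X, R => papp (psubst P X R) (psubst Q X R)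
  | nabs y P, X, R => nabs y (psubst P X R)
  | napp P n, X, R => napp (psubst P X R) n

/-- substitution of the name `g` for the name `x` : P{g/x} -/
def nsubst : Tm → ℕ → ℕ → Tm
  | nil, _, _ => nil
  | pvar Y, _, _ => pvar Y
  | inp m Y P, x, g => inp (if m = x then g else m) Y (nsubst P x g)
  | out m P, x, g => out (if m = x then g else m) (nsubst P x g)
  | par P Q, x, g => par (nsubst P x g) (nsubst Q x g)
  | pabs Y P, x, g => pabs Y (nsubst P x g)
  | papp P Q, x, g => papp (nsubst P x g) (nsubst Q x g)
  | nabs y P, x, g => if y = x then nabs y P else nabs y (nsubst P x g)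
  | napp P n, x, g => napp (nsubst P x g) (if n = x then g else n)

/-- free process variables -/
def fpv : Tm → Finset ℕ
  | nil => ∅
  | pvar Y => {Y}
  | inp _ Y P => fpv P \ {Y}
  | out _ P => fpv P
  | par P Q => fpv P ∪ fpv Q
  | pabs Y P => fpv P \ {Y}
  | papp P Q => fpv P ∪ fpv Q
  | nabs _ P => fpv P
  | napp P _ => fpv P

/-- all process variables -/
def pv : Tm → Finset ℕ
  | nil => ∅
  | pvar Y => {Y}
  | inp _ Y P => {Y} ∪ pv P
  | out _ P => pv P
  | par P Q => pv P ∪ pv Q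
  | pabs Y P => {Y} ∪ pv P
  | papp P Q => pv P ∪ pv Q
  | nabs _ P => pv P
  | napp P _ => pv P

/-- all names occurring in a term -/
def nm : Tm → Finset ℕ
  | nil => ∅
  | pvar _ => ∅
  | inp m _ P => {m} ∪ nm P
  | out m P => {m} ∪ nm P
  | par P Q => nm P ∪ nm Q
  | pabs _ P => nm P
  | papp P Q => nm P ∪ nm Q
  | nabs x P => {x} ∪ nm P
  | napp P n => {n} ∪ nm P

/-- a term is closed if it has no free process variables -/
def Closed (P : Tm) : Prop := fpv P = ∅

/-- a process variable not occurring in `P` -/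
def freshVar (P : Tm) : ℕ := (pv P).sup id + 1

end Tm

open Tm

/-- parallel product of a list of terms -/
def prodTm (l : List Tm) : Tm := l.foldr Tm.par Tm.nil

/-- simultaneous (capture-naive) process substitution -/
def msubst (σ : ℕ → Tm) : Tm → Tm
  | .nil => .nil
  | .pvar Y => σ Y
  | .inp m Y P => .inp m Y (msubst (Function.update σ Y (.pvar Y)) P)
  | .out m P => .out m (msubst σ P)
  | .par P Q => .par (msubst σ P) (msubst σ Q)
  | .pabs Y P => .pabs Y (msubst (Function.update σ Y (.pvar Y)) P)
  | .papp P Q => .papp (msubst σ P) (msubst σ Q)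
  | .nabs x P => .nabs x (msubst σ P)
  | .napp P n => .napp (msubst σ P) n

/-- structural congruence, extended with the two application (beta) laws -/
inductive SC : Tm → Tm → Prop
  | refl (P) : SC P P
  | symm : SC P Q → SC Q P
  | trans : SC P Q → SC Q R → SC P R
  | parAssoc (P Q R) : SC (.par (.par P Q) R) (.par P (.par Q R))
  | parComm (P Q) : SC (.par P Q) (.par Q P)
  | parNil (P) : SC (.par P .nil) P
  | betaP (X P Q) : SC (.papp (.pabs X P) Q) (P.psubst X Q)
  | betaN (x P m) : SC (.napp (.nabs x P) m) (P.nsubst x m)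
  | inpC : SC P Q → SC (.inp m X P) (.inp m X Q)
  | outC : SC P Q → SC (.out m P) (.out m Q)
  | parC : SC P P' → SC Q Q' → SC (.par P Q) (.par P' Q')
  | pabsC : SC P Q → SC (.pabs X P) (.pabs X Q)
  | pappC : SC P P' → SC Q Q' → SC (.papp P Q) (.papp P' Q')
  | nabsC : SC P Q → SC (.nabs x P) (.nabs x Q)
  | nappC : SC P Q → SC (.napp P n) (.napp Q n)

/-- transition labels -/
inductive Lab : Type
  | inp : ℕ → ℕ → Lab
  | out : ℕ → Tm → Lab
  | tau : Lab

/-- process substitution on a label -/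
def Lab.psubst : Lab → ℕ → Tm → Lab
  | .inp m X, _, _ => .inp m X
  | .out m A, X, R => .out m (A.psubst X R)
  | .tau, _, _ => .tau

/-- process variables of a label -/
def Lab.pv : Lab → Finset ℕ
  | .inp _ X => {X}
  | .out _ A => A.pv
  | .tau => ∅

/-- the labelled transition system (with the structural-congruence rule) -/
inductive Step : Tm → Lab → Tm → Prop
  | inp (m X P) : Step (.inp m X P) (.inp m X) P
  | out (m Q) : Step (.out m Q) (.out m Q) .nil
  | parL : Step P l P' → Step (.par P Q) l (.par P' Q)
  | parR : Step Q l Q' → Step (.par P Q) l (.par P Q')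
  | comL : Step P (.out m A) P' → Step Q (.inp m X) Q' →
      Step (.par P Q) .tau (.par P' (Q'.psubst X A))
  | comR : Step P (.inp m X) P' → Step Q (.out m A) Q' →
      Step (.par P Q) .tau (.par (P'.psubst X A) Q')
  | struct : SC Q P → Step P l P' → SC P' Q' → Step Q l Q'

/-- variant of the LTS without the structural-congruence rule, with
explicit application-unfolding rules -/
inductive StepB : Tm → Lab → Tm → Prop
  | inp (m X P) : StepB (.inp m X P) (.inp m X) P
  | out (m Q) : StepB (.out m Q) (.out m Q) .nil
  | parL : StepB P l P' → StepB (.par P Q) l (.par P' Q)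
  | parR : StepB Q l Q' → StepB (.par P Q) l (.par P Q')
  | comL : StepB P (.out m A) P' → StepB Q (.inp m X) Q' →
      StepB (.par P Q) .tau (.par P' (Q'.psubst X A))
  | comR : StepB P (.inp m X) P' → StepB Q (.out m A) Q' →
      StepB (.par P Q) .tau (.par (P'.psubst X A) Q')
  | betaP : StepB (P.psubst X Q) l P' → StepB (.papp (.pabs X P) Q) l P'
  | betaN : StepB (P.nsubst x m) l P' → StepB (.napp (.nabs x P) m) l P'

/-- the depth of a term, as an inductive relation (applications are unfolded) -/
inductive HasDepth : Tm → ℕ → Prop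
  | nil : HasDepth .nil 0
  | pvar (X) : HasDepth (.pvar X) 1
  | inp : HasDepth P n → HasDepth (.inp m X P) (n + 1)
  | out : HasDepth P n → HasDepth (.out m P) (n + 1)
  | par : HasDepth P n → HasDepth Q k → HasDepth (.par P Q) (n + k)
  | pabs : HasDepth P n → HasDepth (.pabs X P) (n + 1)
  | pappVar : HasDepth P n → HasDepth (.papp (.pvar X) P) (n + 1)
  | pappBeta : HasDepth (P.psubst Y Q) n → HasDepth (.papp (.pabs Y P) Q) n
  | nabs : HasDepth P n → HasDepth (.nabs x P) (n + 1)
  | nappVar (X d) : HasDepth (.napp (.pvar X) d) 1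
  | nappBeta : HasDepth (P.nsubst y d) n → HasDepth (.napp (.nabs y P) d) n

/-- the process variable `X` is guarded in a term -/
def Guarded (X : ℕ) : Tm → Prop
  | .nil => True
  | .pvar Y => Y ≠ X
  | .inp _ _ _ => True
  | .out _ _ => True
  | .par P Q => Guarded X P ∧ Guarded X Q
  | .pabs Y P => Y = X ∨ Guarded X P
  | .papp (.pvar Y) _ => Y ≠ X
  | .papp P Q => Guarded X P ∧ Guarded X Q
  | .nabs _ P => Guarded X P
  | .napp P _ => Guarded X P

/-- term kinds -/
def IsPAbs : Tm → Prop
  | .pabs _ _ => True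
  | _ => False

def IsNAbs : Tm → Prop
  | .nabs _ _ => True
  | _ => False

def NonAbs (P : Tm) : Prop := ¬ IsPAbs P ∧ ¬ IsNAbs P

def KindMatch (A B : Tm) : Prop :=
  (NonAbs A → NonAbs B) ∧ (IsPAbs A → IsPAbs B) ∧ (IsNAbs A → IsNAbs B)

/-- the triggers, one for each kind of process variable -/
def TrN (m : ℕ) : Tm := .out m .nil
def TrD (m : ℕ) : Tm := .pabs 0 (.out m (.pvar 0))
def TrDd (m : ℕ) : Tm := .nabs 0 (.out m (.out 0 .nil))

/-- trigger-based matching of input/abstraction residuals (for all the three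
possible kinds of the variable `X`), with fresh trigger name -/
def TrigMatch (R : Tm → Tm → Prop) (X : ℕ) (P' Q' : Tm) : Prop :=
  ∀ m, m ∉ P'.nm ∪ Q'.nm →
    R (P'.psubst X (TrN m)) (Q'.psubst X (TrN m)) ∧
    R (P'.psubst X (TrD m)) (Q'.psubst X (TrD m)) ∧
    R (P'.psubst X (TrDd m)) (Q'.psubst X (TrDd m))

/-- matching of emitted terms using the canonical trigger contexts, with fresh
name `m` (and a fresh bound variable `Z`) -/
def OutMatch (R : Tm → Tm → Prop) (A B P' Q' : Tm) : Prop :=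
  let Z := freshVar (.par (.par A B) (.par P' Q'))
  (NonAbs A → NonAbs B ∧ ∀ m, m ∉ A.nm ∪ B.nm ∪ P'.nm ∪ Q'.nm →
      R (.par (.inp m Z A) P') (.par (.inp m Z B) Q')) ∧
  (IsPAbs A → IsPAbs B ∧ ∀ m, m ∉ A.nm ∪ B.nm ∪ P'.nm ∪ Q'.nm →
      R (.par (.inp m Z (.papp A (.pvar Z))) P') (.par (.inp m Z (.papp B (.pvar Z))) Q')) ∧
  (IsNAbs A → IsNAbs B ∧ ∀ m, m ∉ A.nm ∪ B.nm ∪ P'.nm ∪ Q'.nm →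
      R (.par (.inp m Z (.papp (.pvar Z) A)) P') (.par (.inp m Z (.papp (.pvar Z) B)) Q'))

/-! ### Strong HO-IO bisimilarity -/

def IsHOIOBisim (R : Tm → Tm → Prop) : Prop :=
  (∀ P Q, R P Q → R Q P) ∧
  ∀ P Q, R P Q →
    (NonAbs P → NonAbs Q) ∧
    (∀ Y A, P = .pabs Y A → ∃ B, Q = .pabs Y B ∧ R A B) ∧
    (∀ y A, P = .nabs y A → ∃ B, Q = .nabs y B ∧ R A B) ∧
    (∀ a A P', Step P (.out a A) P' → ∃ B Q', Step Q (.out a B) Q' ∧ R A B ∧ R P' Q') ∧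
    (∀ a X P', Step P (.inp a X) P' → ∃ Q', Step Q (.inp a X) Q' ∧ R P' Q') ∧
    (∀ X P', SC P (.par (.pvar X) P') → ∃ Q', SC Q (.par (.pvar X) Q') ∧ R P' Q') ∧
    (∀ X A P', SC P (.par (.papp (.pvar X) A) P') →
        ∃ B Q', SC Q (.par (.papp (.pvar X) B) Q') ∧ R A B ∧ R P' Q') ∧
    (∀ X d P', SC P (.par (.napp (.pvar X) d) P') →
        ∃ Q', SC Q (.par (.napp (.pvar X) d) Q') ∧ R P' Q')

/-- strong HO-IO bisimilarity ∼IO -/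
def HOIO (P Q : Tm) : Prop := ∃ R, IsHOIOBisim R ∧ R P Q

/-- composition ≡ R ≡ -/
def SCcomp (R : Tm → Tm → Prop) : Tm → Tm → Prop :=
  fun P Q => ∃ P₁ Q₁, SC P P₁ ∧ R P₁ Q₁ ∧ SC Q₁ Q

/-- strong HO-IO bisimulation up to structural congruence -/
def IsHOIOBisimUpTo (R : Tm → Tm → Prop) : Prop :=
  (∀ P Q, R P Q → R Q P) ∧
  ∀ P Q, R P Q →
    (NonAbs P → NonAbs Q) ∧
    (∀ Y A, P = .pabs Y A → ∃ B, Q = .pabs Y B ∧ SCcomp R A B) ∧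
    (∀ y A, P = .nabs y A → ∃ B, Q = .nabs y B ∧ SCcomp R A B) ∧
    (∀ a A P', Step P (.out a A) P' →
        ∃ B Q', Step Q (.out a B) Q' ∧ SCcomp R A B ∧ SCcomp R P' Q') ∧
    (∀ a X P', Step P (.inp a X) P' → ∃ Q', Step Q (.inp a X) Q' ∧ SCcomp R P' Q') ∧
    (∀ X P', SC P (.par (.pvar X) P') → ∃ Q', SC Q (.par (.pvar X) Q') ∧ SCcomp R P' Q') ∧
    (∀ X A P', SC P (.par (.papp (.pvar X) A) P') →
        ∃ B Q', SC Q (.par (.papp (.pvar X) B) Q') ∧ SCcomp R A B ∧ SCcomp R P' Q') ∧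
    (∀ X d P', SC P (.par (.napp (.pvar X) d) P') →
        ∃ Q', SC Q (.par (.napp (.pvar X) d) Q') ∧ SCcomp R P' Q')

/-! ### Strong HO bisimilarity -/

def IsHOBisim (R : Tm → Tm → Prop) : Prop :=
  (∀ P Q, R P Q → R Q P) ∧
  (∀ P Q, R P Q → Closed P ∧ Closed Q) ∧
  ∀ P Q, R P Q →
    (NonAbs P → NonAbs Q) ∧
    (∀ Y P₁, P = .pabs Y P₁ → ∃ Q₁, Q = .pabs Y Q₁ ∧
        ∀ A, Closed A → R (P₁.psubst Y A) (Q₁.psubst Y A)) ∧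
    (∀ y A, P = .nabs y A → ∃ B, Q = .nabs y B ∧ R A B) ∧
    (∀ a A P', Step P (.out a A) P' → ∃ B Q', Step Q (.out a B) Q' ∧ R A B ∧ R P' Q') ∧
    (∀ a X P', Step P (.inp a X) P' → ∃ Q', Step Q (.inp a X) Q' ∧
        ∀ A, Closed A → R (P'.psubst X A) (Q'.psubst X A)) ∧
    (∀ P', Step P .tau P' → ∃ Q', Step Q .tau Q' ∧ R P' Q')

/-- strong HO bisimilarity ∼HO on closed terms -/
def HOB (P Q : Tm) : Prop := ∃ R, IsHOBisim R ∧ R P Q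

/-- the extension of ∼HO to open terms, by closure under closed substitutions -/
def HOBo (P Q : Tm) : Prop :=
  ∀ σ : ℕ → Tm, (∀ i, Closed (σ i)) → HOB (msubst σ P) (msubst σ Q)

/-! ### Strong context bisimilarity -/

def IsCtxBisim (R : Tm → Tm → Prop) : Prop :=
  (∀ P Q, R P Q → R Q P) ∧
  (∀ P Q, R P Q → Closed P ∧ Closed Q) ∧
  ∀ P Q, R P Q →
    (NonAbs P → NonAbs Q) ∧
    (∀ Y P₁, P = .pabs Y P₁ → ∃ Q₁, Q = .pabs Y Q₁ ∧
        ∀ A, Closed A → R (P₁.psubst Y A) (Q₁.psubst Y A)) ∧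
    (∀ y A, P = .nabs y A → ∃ B, Q = .nabs y B ∧ R A B) ∧
    (∀ a X P', Step P (.inp a X) P' → ∃ Q', Step Q (.inp a X) Q' ∧
        ∀ A, Closed A → R (P'.psubst X A) (Q'.psubst X A)) ∧
    (∀ a A P', Step P (.out a A) P' → ∃ B Q', Step Q (.out a B) Q' ∧ KindMatch A B ∧
        ∀ (E : Tm) (X : ℕ), E.fpv ⊆ {X} → R (.par (E.psubst X A) P') (.par (E.psubst X B) Q')) ∧
    (∀ P', Step P .tau P' → ∃ Q', Step Q .tau Q' ∧ R P' Q')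

/-- strong context bisimilarity ∼CTX on closed terms -/
def CTXB (P Q : Tm) : Prop := ∃ R, IsCtxBisim R ∧ R P Q

/-- the extension of ∼CTX to open terms -/
def CTXBo (P Q : Tm) : Prop :=
  ∀ σ : ℕ → Tm, (∀ i, Closed (σ i)) → CTXB (msubst σ P) (msubst σ Q)

/-! ### Strong normal bisimilarity -/

def IsNrBisim (R : Tm → Tm → Prop) : Prop :=
  (∀ P Q, R P Q → R Q P) ∧
  (∀ P Q, R P Q → Closed P ∧ Closed Q) ∧
  ∀ P Q, R P Q →
    (NonAbs P → NonAbs Q) ∧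
    (∀ Y P₁, P = .pabs Y P₁ → ∃ Q₁, Q = .pabs Y Q₁ ∧ TrigMatch R Y P₁ Q₁) ∧
    (∀ y A, P = .nabs y A → ∃ B, Q = .nabs y B ∧ R A B) ∧
    (∀ a X P', Step P (.inp a X) P' → ∃ Q', Step Q (.inp a X) Q' ∧ TrigMatch R X P' Q') ∧
    (∀ a A P', Step P (.out a A) P' → ∃ B Q', Step Q (.out a B) Q' ∧ OutMatch R A B P' Q') ∧
    (∀ P', Step P .tau P' → ∃ Q', Step Q .tau Q' ∧ R P' Q')

/-- strong normal bisimilarity ∼NR on closed terms -/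
def NRB (P Q : Tm) : Prop := ∃ R, IsNrBisim R ∧ R P Q

/-- an assignment substituting fresh-named triggers for free variables -/
def TriggerAssign (P Q : Tm) (t : ℕ → Tm) : Prop :=
  ∃ m : ℕ → ℕ, Function.Injective m ∧ (∀ X, m X ∉ P.nm ∪ Q.nm) ∧
    ∀ X, t X = TrN (m X) ∨ t X = TrD (m X) ∨ t X = TrDd (m X)

/-- the extension of ∼NR to open terms: substitute fresh-named triggers for the
free variables -/
def NRBo (P Q : Tm) : Prop :=
  ∀ t : ℕ → Tm, TriggerAssign P Q t → NRB (msubst t P) (msubst t Q)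

/-! ### Open strong normal bisimilarity -/

def IsOSNBisim (R : Tm → Tm → Prop) : Prop :=
  (∀ P Q, R P Q → R Q P) ∧
  ∀ P Q, R P Q →
    (NonAbs P → NonAbs Q) ∧
    (∀ Y A, P = .pabs Y A → ∃ B, Q = .pabs Y B ∧ R A B) ∧
    (∀ y A, P = .nabs y A → ∃ B, Q = .nabs y B ∧ R A B) ∧
    (∀ a A P', Step P (.out a A) P' → ∃ B Q', Step Q (.out a B) Q' ∧ OutMatch R A B P' Q') ∧
    (∀ P', Step P .tau P' → ∃ Q', Step Q .tau Q' ∧ R P' Q') ∧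
    (∀ a X P', Step P (.inp a X) P' → ∃ Q', Step Q (.inp a X) Q' ∧ R P' Q') ∧
    (∀ X P', SC P (.par (.pvar X) P') → ∃ Q', SC Q (.par (.pvar X) Q') ∧ R P' Q') ∧
    (∀ X A P', SC P (.par (.papp (.pvar X) A) P') →
        ∃ B Q', SC Q (.par (.papp (.pvar X) B) Q') ∧ OutMatch R A B P' Q') ∧
    (∀ X d P', SC P (.par (.napp (.pvar X) d) P') →
        ∃ Q', SC Q (.par (.napp (.pvar X) d) Q') ∧ R P' Q')

/-- open strong normal bisimilarity ≐ -/
def OSN (P Q : Tm) : Prop := ∃ R, IsOSNBisim R ∧ R P Q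

/-- an injective encoding of terms into natural numbers -/
def enc : Tm → ℕ
  | .nil => Nat.pair 0 0
  | .pvar X => Nat.pair 1 X
  | .inp m X P => Nat.pair 2 (Nat.pair m (Nat.pair X (enc P)))
  | .out m P => Nat.pair 3 (Nat.pair m (enc P))
  | .par P Q => Nat.pair 4 (Nat.pair (enc P) (enc Q))
  | .pabs X P => Nat.pair 5 (Nat.pair X (enc P))
  | .papp P Q => Nat.pair 6 (Nat.pair (enc P) (enc Q))
  | .nabs x P => Nat.pair 7 (Nat.pair x (enc P))
  | .napp P n => Nat.pair 8 (Nat.pair (enc P) n)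

/-- a process is prime if it is not bisimilar to 0 and cannot be split into two
non-trivial parallel components -/
def PrimeTm (P : Tm) : Prop :=
  ¬ HOIO P .nil ∧ ∀ P₁ P₂, HOIO P (.par P₁ P₂) → HOIO P₁ .nil ∨ HOIO P₂ .nil

theorem SC.par_left_comm (P O Q : Tm) : SC (.par P (.par O Q)) (.par O (.par P Q)) :=
  (SC.parAssoc P O Q).symm.trans (((SC.parComm P O).parC (.refl Q)).trans (SC.parAssoc O P Q))

theorem Step.sc_par_out {P P' : Tm} {m : ℕ} {A : Tm} (h : Step P (.out m A) P') :
    SC P (.par (.out m A) P') := by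
  generalize hl : Lab.out m A = l at h
  induction h with
  | inp => cases hl
  | out => cases hl; exact (SC.parNil _).symm
  | parL _ ih => exact (SC.parC (ih hl) (.refl _)).trans (SC.parAssoc _ _ _)
  | parR _ ih => exact (SC.parC (.refl _) (ih hl)).trans (SC.par_left_comm _ _ _)
  | comL | comR => cases hl
  | struct hQP _ hP'Q' ih => exact hQP.trans ((ih hl).trans (SC.parC (.refl _) hP'Q'))

theorem Step.exists_sc_par_inp {P P' : Tm} {m X : ℕ} (h : Step P (.inp m X) P') :
    ∃ P₁ P₂, SC P (.par (.inp m X P₁) P₂) ∧ SC P' (.par P₁ P₂) := by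
  generalize hl : Lab.inp m X = l at h
  induction h with
  | inp => cases hl; exact ⟨_, .nil, (SC.parNil _).symm, (SC.parNil _).symm⟩
  | out | comL | comR => cases hl
  | parL _ ih =>
    obtain ⟨P₁, P₂, hP, hP'⟩ := ih hl
    exact ⟨P₁, .par P₂ _, (SC.parC hP (.refl _)).trans (SC.parAssoc _ _ _),
      (SC.parC hP' (.refl _)).trans (SC.parAssoc _ _ _)⟩
  | parR _ ih =>
    obtain ⟨P₁, P₂, hP, hP'⟩ := ih hl
    exact ⟨P₁, .par _ P₂, (SC.parC (.refl _) hP).trans (SC.par_left_comm _ _ _),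
      (SC.parC (.refl _) hP').trans (SC.par_left_comm _ _ _)⟩
  | struct hQP _ hP'Q' ih =>
    obtain ⟨P₁, P₂, hP, hP'⟩ := ih hl
    exact ⟨P₁, P₂, hQP.trans hP, hP'Q'.symm.trans hP'⟩

/-- structure of terms performing output and input transitions. -/
theorem step_structure (P P' : Tm) :
    (∀ (m : ℕ) (A : Tm), Step P (.out m A) P' → SC P (.par (.out m A) P')) ∧
    (∀ (m X : ℕ), Step P (.inp m X) P' →
      ∃ P₁ P₂, SC P (.par (.inp m X P₁) P₂) ∧ SC P' (.par P₁ P₂)) :=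
  ⟨fun _ _ h => h.sc_par_out, fun _ _ h => h.exists_sc_par_inp⟩
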